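/- arXiv:2308.15838 — 3 statements merged into one kernel-verified Lean document; each statement's English description precedes it below -/
import Mathlib

section
/- Let g: ℝ → ℝ be convex and differentiable, λ, η > 0, β̃ > 0, and F(β) = g(β) + λ|β| + η|β − β̃|. If β̂ minimizes F, then: if β̂ > β̃ then g′(β̂) = −(λ+η), and if β̂ < 0 then g′(β̂) = λ+η. Consequently, if |g′(β)| < λ + η for all β, then every minimizer of F lies in the interval [0, β̃]. -/
/-- Estimation range for the one-dimensional Transfer Lasso: for a convex differentiable
loss `g`, `λ, η > 0`, `β̃ > 0` and `F(β) = g(β) + λ|β| + η|β − β̃|`, any minimizer `β̂`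
with `β̂ > β̃` satisfies `g′(β̂) = −(λ+η)`, any minimizer with `β̂ < 0` satisfies
`g′(β̂) = λ+η`; hence if `|g′| < λ+η` everywhere, every minimizer lies in `[0, β̃]`. -/
theorem stmt_7 (g : ℝ → ℝ) (hg : ConvexOn ℝ Set.univ g) (hgd : Differentiable ℝ g)
    (lam eta βt : ℝ) (hlam : 0 < lam) (heta : 0 < eta) (hβt : 0 < βt)
    (F : ℝ → ℝ) (hF : ∀ β, F β = g β + lam * |β| + eta * |β - βt|) :
    (∀ βh, (∀ x, F βh ≤ F x) →
      (βh > βt → deriv g βh = -(lam + eta)) ∧ (βh < 0 → deriv g βh = lam + eta)) ∧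
    ((∀ β, |deriv g β| < lam + eta) →
      ∀ βh, (∀ x, F βh ≤ F x) → βh ∈ Set.Icc 0 βt) := by
  have key : ∀ βh, (∀ x, F βh ≤ F x) →
      (βh > βt → deriv g βh = -(lam + eta)) ∧ (βh < 0 → deriv g βh = lam + eta) := by
    intro βh hmin
    have hloc : IsLocalMin F βh := Filter.Eventually.of_forall hmin
    constructor
    · intro hgt
      have heq : F =ᶠ[nhds βh] (fun β => g β + lam * β + eta * (β - βt)) := by
        filter_upwards [Ioi_mem_nhds hgt] with x hx
        have hx0 : (0:ℝ) < x := lt_trans hβt hx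
        rw [hF, abs_of_pos hx0, abs_of_pos (sub_pos.mpr hx)]
      have hloc' : IsLocalMin (fun β => g β + lam * β + eta * (β - βt)) βh :=
        hloc.congr heq
      have hd : HasDerivAt (fun β => g β + lam * β + eta * (β - βt))
          (deriv g βh + lam + eta) βh := by
        have h0 := (hgd βh).hasDerivAt
        have h1 : HasDerivAt (fun β : ℝ => lam * β) lam βh := by
          simpa using (hasDerivAt_id βh).const_mul lam
        have h2 : HasDerivAt (fun β : ℝ => eta * (β - βt)) eta βh := by
          simpa using ((hasDerivAt_id βh).sub_const βt).const_mul eta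
        exact (h0.add h1).add h2
      have hz := hloc'.hasDerivAt_eq_zero hd
      linarith
    · intro hlt
      have heq : F =ᶠ[nhds βh] (fun β => g β + lam * (-β) + eta * (βt - β)) := by
        filter_upwards [Iio_mem_nhds hlt] with x hx
        have hx' : x < βt := lt_trans hx hβt
        rw [hF, abs_of_neg hx, abs_of_neg (sub_neg.mpr hx'), neg_sub]
      have hloc' : IsLocalMin (fun β => g β + lam * (-β) + eta * (βt - β)) βh :=
        hloc.congr heq
      have hd : HasDerivAt (fun β => g β + lam * (-β) + eta * (βt - β))
          (deriv g βh + (-lam) + (-eta)) βh := by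
        have h0 := (hgd βh).hasDerivAt
        have h1 : HasDerivAt (fun β : ℝ => lam * (-β)) (-lam) βh := by
          simpa using (hasDerivAt_id βh).neg.const_mul lam
        have h2 : HasDerivAt (fun β : ℝ => eta * (βt - β)) (-eta) βh := by
          simpa using ((hasDerivAt_id βh).const_sub βt).const_mul eta
        exact (h0.add h1).add h2
      have hz := hloc'.hasDerivAt_eq_zero hd
      linarith
  refine ⟨key, ?_⟩
  intro hbound βh hmin
  obtain ⟨h1, h2⟩ := key βh hmin
  have hb := hbound βh
  constructor
  · by_contra h
    push_neg at h
    rw [h2 h] at hb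
    rw [abs_of_pos (by linarith)] at hb
    linarith
  · by_contra h
    push_neg at h
    rw [h1 h] at hb
    rw [abs_neg, abs_of_pos (by linarith)] at hb
    linarith
end

section
/- Let λ, η, v, w > 0 with λv ≠ ηw, and β̃ ∈ ℝ. Then ∫_ℝ exp(−λv|β| − ηw|β − β̃|) dβ = (2λv/((λv)² − (ηw)²))·exp(−ηw|β̃|) − (2ηw/((λv)² − (ηw)²))·exp(−λv|β̃|). -/
/-!
Split the line at the two kinks `0` and `β̃` (after reflecting `β ↦ -β`, we may assume `β̃ ≥ 0`).
On each of the three pieces the exponent is affine, so the integrand is a pure exponential: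
the two tails contribute `(e^{-ηw β̃} + e^{-λv β̃}) / (λv + ηw)` and the middle segment
`(e^{-λv β̃} - e^{-ηw β̃}) / (ηw - λv)`; putting these over the common denominator
`(λv)² - (ηw)²` gives the formula.
-/

open MeasureTheory Set Real

section Pieces

variable {a b t x : ℝ}

lemma exp_neg_mul_abs_sub_mul_abs_sub_of_nonpos (ht : 0 ≤ t) (hx : x ≤ 0) :
    exp (-(a * |x|) - b * |x - t|) = exp (-(b * t)) * exp ((a + b) * x) := by
  rw [abs_of_nonpos hx, abs_of_nonpos (by linarith), ← exp_add]
  ring_nf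

lemma exp_neg_mul_abs_sub_mul_abs_sub_of_mem_Icc (hx : x ∈ Icc 0 t) :
    exp (-(a * |x|) - b * |x - t|) = exp (-(b * t)) * exp ((b - a) * x) := by
  rw [abs_of_nonneg hx.1, abs_of_nonpos (by linarith [hx.2]), ← exp_add]
  ring_nf

lemma exp_neg_mul_abs_sub_mul_abs_sub_of_le (ht : 0 ≤ t) (hx : t ≤ x) :
    exp (-(a * |x|) - b * |x - t|) = exp (b * t) * exp (-(a + b) * x) := by
  rw [abs_of_nonneg (by linarith), abs_of_nonneg (by linarith), ← exp_add]
  ring_nf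

end Pieces

lemma integral_exp_mul_of_ne_zero {c : ℝ} (hc : c ≠ 0) (s t : ℝ) :
    ∫ x in s..t, exp (c * x) = (exp (c * t) - exp (c * s)) / c := by
  rw [intervalIntegral.integral_comp_mul_left (fun y => exp y) hc, integral_exp, smul_eq_mul,
    inv_mul_eq_div]

lemma integral_exp_neg_mul_abs_sub_mul_abs_sub_of_nonneg {a b t : ℝ} (hab : 0 < a + b)
    (hne : a ≠ b) (ht : 0 ≤ t) :
    ∫ x, exp (-(a * |x|) - b * |x - t|) =
      (exp (-(b * t)) + exp (-(a * t))) / (a + b) +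
        (exp (-(a * t)) - exp (-(b * t))) / (b - a) := by
  set f : ℝ → ℝ := fun x => exp (-(a * |x|) - b * |x - t|)
  have hneg : -(a + b) < 0 := by linarith
  have left : EqOn f (fun x => exp (-(b * t)) * exp ((a + b) * x)) (Iic 0) :=
    fun x hx => exp_neg_mul_abs_sub_mul_abs_sub_of_nonpos ht hx
  have middle : EqOn f (fun x => exp (-(b * t)) * exp ((b - a) * x)) (uIcc 0 t) := by
    intro x hx
    rw [uIcc_of_le ht] at hx
    exact exp_neg_mul_abs_sub_mul_abs_sub_of_mem_Icc hx
  have right : EqOn f (fun x => exp (b * t) * exp (-(a + b) * x)) (Ioi t) :=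
    fun x hx => exp_neg_mul_abs_sub_mul_abs_sub_of_le ht hx.le
  have int_left : IntegrableOn f (Iic 0) :=
    IntegrableOn.congr_fun ((integrableOn_exp_mul_Iic hab 0).const_mul _) left.symm
      measurableSet_Iic
  have int_right : IntegrableOn f (Ioi t) :=
    IntegrableOn.congr_fun ((integrableOn_exp_mul_Ioi hneg t).const_mul _) right.symm
      measurableSet_Ioi
  have int_middle : IntervalIntegrable f volume 0 t :=
    (by fun_prop : Continuous f).intervalIntegrable 0 t
  have int_Ioi : IntegrableOn f (Ioi 0) :=
    Ioc_union_Ioi_eq_Ioi ht ▸ int_middle.1.union int_right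
  rw [← intervalIntegral.integral_Iic_add_Ioi int_left int_Ioi,
    ← intervalIntegral.integral_interval_add_Ioi' int_middle int_right,
    setIntegral_congr_fun measurableSet_Iic left, intervalIntegral.integral_congr middle,
    setIntegral_congr_fun measurableSet_Ioi right, integral_const_mul,
    intervalIntegral.integral_const_mul, integral_const_mul, integral_exp_mul_Iic hab,
    integral_exp_mul_of_ne_zero (sub_ne_zero.mpr hne.symm), integral_exp_mul_Ioi hneg]
  have hmiddle : exp (-(b * t)) * exp ((b - a) * t) = exp (-(a * t)) := by
    rw [← exp_add]; ring_nf
  have hright : exp (b * t) * exp (-(a + b) * t) = exp (-(a * t)) := by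
    rw [← exp_add]; ring_nf
  simp only [mul_zero, exp_zero, neg_div_neg_eq]
  linear_combination hmiddle / (b - a) + hright / (a + b)

lemma integral_exp_neg_mul_abs_sub_mul_abs_sub {a b : ℝ} (hab : 0 < a + b) (hne : a ≠ b)
    (t : ℝ) :
    ∫ x, exp (-(a * |x|) - b * |x - t|) =
      2 * a / (a ^ 2 - b ^ 2) * exp (-(b * |t|)) - 2 * b / (a ^ 2 - b ^ 2) * exp (-(a * |t|)) := by
  have reflect :
      ∫ x, exp (-(a * |x|) - b * |x - t|) = ∫ x, exp (-(a * |x|) - b * |x - (|t|)|) := by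
    rcases abs_choice t with h | h
    · rw [h]
    · rw [h]
      conv_rhs => rw [← integral_neg_eq_self]
      congr 1 with x
      rw [abs_neg, neg_sub_neg, abs_sub_comm]
  have hsub : a - b ≠ 0 := sub_ne_zero.mpr hne
  have hsq : a ^ 2 - b ^ 2 = (a + b) * (a - b) := by ring
  rw [reflect, integral_exp_neg_mul_abs_sub_mul_abs_sub_of_nonneg hab hne (abs_nonneg t), hsq]
  field_simp
  ring

/-- Normalization constant of the Adaptive Transfer Lasso prior:
`∫ exp(−λv|β| − ηw|β−β̃|) dβ
  = (2λv/((λv)²−(ηw)²)) exp(−ηw|β̃|) − (2ηw/((λv)²−(ηw)²)) exp(−λv|β̃|)`. -/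
theorem stmt_13 (lam eta v w βt : ℝ) (hlam : 0 < lam) (heta : 0 < eta)
    (hv : 0 < v) (hw : 0 < w) (hne : lam * v ≠ eta * w) :
    ∫ β : ℝ, Real.exp (-(lam * v * |β|) - eta * w * |β - βt|) =
      (2 * (lam * v) / ((lam * v) ^ 2 - (eta * w) ^ 2)) * Real.exp (-(eta * w * |βt|)) -
      (2 * (eta * w) / ((lam * v) ^ 2 - (eta * w) ^ 2)) * Real.exp (-(lam * v * |βt|)) :=
  integral_exp_neg_mul_abs_sub_mul_abs_sub (by positivity) hne βt
end

section
/- Let Cₙ → C entrywise where each Cₙ and C is a p×p symmetric positive semidefinite matrix and C is positive definite, let wₙ → w in ℝ^p, λₙ → λ₀ ≥ 0. Define Vₙ(u) = uᵀCₙu − 2uᵀwₙ + λₙΣⱼ|uⱼ| and V(u) = uᵀCu − 2uᵀw + λ₀Σⱼ|uⱼ|. Then Vₙ converges to V uniformly on every compact subset of ℝ^p, and argmin Vₙ → argmin V. -/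
/-! `V_θ(u) = uᵀAu - 2uᵀb + λ‖u‖₁` depends continuously on `(θ, u)` with `θ = (A, b, λ)`, so
`θₙ → θ` already gives uniform convergence on compacta. Positive definiteness of `C` gives
`m‖u‖² ≤ uᵀCu`, so `V` is coercive and strictly convex and has a unique minimizer `u*`; for `n`
large the same bound holds for `Cₙ` with `m / 2`, and `Vₙ(uₙ) ≤ Vₙ(0) = 0` then traps the
minimizers `uₙ` in a fixed ball. On that compact ball uniform convergence forces
`V(uₙ) → V(u*)`, so every cluster point of `(uₙ)` minimizes `V` and hence equals `u*`. -/

open Matrix Filter Topology Set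

section ArgminConvergence

variable {ι X : Type*}

theorem IsCompact.tendsto_of_tendsto_comp_of_unique_level [TopologicalSpace X] {f : X → ℝ}
    (hf : Continuous f) {K : Set X} (hK : IsCompact K) {l : Filter ι} {x : ι → X} {a : X}
    (hxK : ∀ᶠ n in l, x n ∈ K) (hfx : Tendsto (f ∘ x) l (𝓝 (f a)))
    (ha : ∀ y ∈ K, f y = f a → y = a) : Tendsto x l (𝓝 a) :=
  hK.tendsto_nhds_of_unique_mapClusterPt hxK fun y hyK hy =>
    ha y hyK (eq_of_nhds_neBot (ClusterPt.mono (hy.continuousAt_comp hf.continuousAt) hfx))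

theorem TendstoUniformlyOn.tendsto_comp_of_forall_le {F : ι → X → ℝ} {f : X → ℝ}
    {l : Filter ι} {K : Set X} (hF : TendstoUniformlyOn F f l K) {x : ι → X} {a : X}
    (ha : a ∈ K) (hxK : ∀ᶠ n in l, x n ∈ K) (hFx : ∀ n, F n (x n) ≤ F n a)
    (hfa : ∀ y ∈ K, f a ≤ f y) : Tendsto (f ∘ x) l (𝓝 (f a)) := by
  refine tendsto_order.2 ⟨fun b hb => hxK.mono fun n hn => hb.trans_le (hfa _ hn), fun b hb => ?_⟩
  have hε : 0 < (b - f a) / 2 := half_pos (sub_pos.2 hb)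
  filter_upwards [Metric.tendstoUniformlyOn_iff.1 hF _ hε, hxK] with n hn hxn
  have hx := abs_lt.1 (Real.dist_eq _ _ ▸ hn (x n) hxn)
  have ha' := abs_lt.1 (Real.dist_eq _ _ ▸ hn a ha)
  have hxa := hFx n
  simp only [Function.comp_apply]
  linarith [hx.2, ha'.1]

theorem tendsto_argmin_of_tendstoUniformlyOn [TopologicalSpace X] {F : ι → X → ℝ} {f : X → ℝ}
    (hf : Continuous f) {l : Filter ι} {K : Set X} (hK : IsCompact K)
    (hF : TendstoUniformlyOn F f l K) {x : ι → X} {a : X} (ha : a ∈ K)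
    (hxK : ∀ᶠ n in l, x n ∈ K) (hFx : ∀ n, F n (x n) ≤ F n a)
    (hfa : ∀ y ∈ K, y ≠ a → f a < f y) : Tendsto x l (𝓝 a) :=
  hK.tendsto_of_tendsto_comp_of_unique_level hf hxK
    (hF.tendsto_comp_of_forall_le ha hxK hFx fun y hy =>
      (eq_or_ne y a).elim (fun h => h ▸ le_rfl) fun h => (hfa y hy h).le)
    fun y hy hya => by_contra fun h => (hfa y hy h).ne' hya

end ArgminConvergence

theorem IsCompact.tendstoUniformlyOn_of_continuous_uncurry {ι α β γ : Type*}
    [TopologicalSpace α] [TopologicalSpace β] [UniformSpace γ] {f : α → β → γ}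
    (hf : Continuous (Function.uncurry f)) {K : Set β} (hK : IsCompact K) {l : Filter ι}
    {θ : ι → α} {θ₀ : α} (hθ : Tendsto θ l (𝓝 θ₀)) :
    TendstoUniformlyOn (fun n => f (θ n)) (f θ₀) l K := by
  intro u hu
  obtain ⟨v, hv, hvu⟩ :=
    hK.mem_uniformity_of_prod hf.continuousOn (mem_univ θ₀) (symm_le_uniformity hu)
  rw [nhdsWithin_univ] at hv
  exact mem_of_superset (hθ hv) fun n hn y hy => hvu _ hn y hy

namespace Matrix

variable {n : Type*} [Fintype n]

theorem continuous_dotProduct_mulVec_uncurry :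
    Continuous fun x : Matrix n n ℝ × (n → ℝ) => x.2 ⬝ᵥ x.1 *ᵥ x.2 := by
  fun_prop

theorem smul_dotProduct_mulVec_smul (A : Matrix n n ℝ) (c : ℝ) (u : n → ℝ) :
    (c • u) ⬝ᵥ A *ᵥ (c • u) = c ^ 2 * (u ⬝ᵥ A *ᵥ u) := by
  simp only [mulVec_smul, dotProduct_smul, smul_dotProduct, smul_eq_mul]
  ring

theorem mul_sq_norm_le_dotProduct_mulVec {A : Matrix n n ℝ} {m : ℝ}
    (hA : ∀ v ∈ Metric.sphere (0 : n → ℝ) 1, m ≤ v ⬝ᵥ A *ᵥ v) (u : n → ℝ) :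
    m * ‖u‖ ^ 2 ≤ u ⬝ᵥ A *ᵥ u := by
  rcases eq_or_ne u 0 with rfl | hu
  · simp
  have hu' : ‖u‖ ≠ 0 := norm_ne_zero_iff.2 hu
  have hsphere : ‖u‖⁻¹ • u ∈ Metric.sphere (0 : n → ℝ) 1 := by
    simp [norm_smul, hu']
  have := hA _ hsphere
  rw [smul_dotProduct_mulVec_smul, inv_pow, ← div_eq_inv_mul, le_div_iff₀ (by positivity)] at this
  exact this

theorem PosDef.exists_pos_forall_sphere_le {C : Matrix n n ℝ} (hC : C.PosDef) :
    ∃ m > 0, ∀ v ∈ Metric.sphere (0 : n → ℝ) 1, m ≤ v ⬝ᵥ C *ᵥ v :=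
  (isCompact_sphere 0 1).exists_forall_le' (by fun_prop) fun v hv => by
    simpa using hC.dotProduct_mulVec_pos (ne_zero_of_mem_unit_sphere ⟨v, hv⟩)

theorem PosDef.exists_pos_mul_sq_norm_le {C : Matrix n n ℝ} (hC : C.PosDef) :
    ∃ m > 0, ∀ u : n → ℝ, m * ‖u‖ ^ 2 ≤ u ⬝ᵥ C *ᵥ u :=
  let ⟨m, hm, hmC⟩ := hC.exists_pos_forall_sphere_le
  ⟨m, hm, mul_sq_norm_le_dotProduct_mulVec hmC⟩

theorem PosDef.eventually_mul_sq_norm_le {ι : Type*} {l : Filter ι} {A : ι → Matrix n n ℝ}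
    {C : Matrix n n ℝ} (hC : C.PosDef) (hA : Tendsto A l (𝓝 C)) :
    ∃ m > 0, ∀ᶠ i in l, ∀ u : n → ℝ, m * ‖u‖ ^ 2 ≤ u ⬝ᵥ A i *ᵥ u := by
  obtain ⟨m, hm, hmC⟩ := hC.exists_pos_forall_sphere_le
  have hunif := (isCompact_sphere (0 : n → ℝ) 1).tendstoUniformlyOn_of_continuous_uncurry
    (f := fun A u => u ⬝ᵥ A *ᵥ u) continuous_dotProduct_mulVec_uncurry hA
  refine ⟨m / 2, half_pos hm, ?_⟩
  filter_upwards [Metric.tendstoUniformlyOn_iff.1 hunif _ (half_pos hm)] with i hi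
  refine mul_sq_norm_le_dotProduct_mulVec fun v hv => ?_
  have := abs_lt.1 (Real.dist_eq _ _ ▸ hi v hv)
  linarith [hmC v hv, this.2]

theorem PosDef.strictConvexOn_dotProduct_mulVec {A : Matrix n n ℝ} (hA : A.PosDef) :
    StrictConvexOn ℝ univ fun u : n → ℝ => u ⬝ᵥ A *ᵥ u := by
  refine ⟨convex_univ, fun x _ y _ hxy a b ha hb hab => ?_⟩
  have hpos : 0 < (x - y) ⬝ᵥ A *ᵥ (x - y) := by
    simpa using hA.dotProduct_mulVec_pos (sub_ne_zero.2 hxy)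
  obtain rfl : b = 1 - a := by linarith
  have key : a * (x ⬝ᵥ A *ᵥ x) + (1 - a) * (y ⬝ᵥ A *ᵥ y)
      - (a • x + (1 - a) • y) ⬝ᵥ A *ᵥ (a • x + (1 - a) • y)
      = a * (1 - a) * ((x - y) ⬝ᵥ A *ᵥ (x - y)) := by
    simp only [mulVec_add, mulVec_sub, mulVec_smul, dotProduct_add, add_dotProduct,
      dotProduct_sub, sub_dotProduct, dotProduct_smul, smul_dotProduct, smul_eq_mul]
    ring
  simp only [smul_eq_mul]
  nlinarith [mul_pos (mul_pos ha hb) hpos]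

end Matrix

section Lasso

variable {n : Type*} [Fintype n]

noncomputable def lassoObjective (A : Matrix n n ℝ) (b : n → ℝ) (lam : ℝ) (u : n → ℝ) : ℝ :=
  u ⬝ᵥ A *ᵥ u - 2 * (u ⬝ᵥ b) + lam * ∑ j, |u j|

theorem lassoObjective_zero (A : Matrix n n ℝ) (b : n → ℝ) (lam : ℝ) :
    lassoObjective A b lam 0 = 0 := by
  simp [lassoObjective]

theorem continuous_lassoObjective (A : Matrix n n ℝ) (b : n → ℝ) (lam : ℝ) :
    Continuous (lassoObjective A b lam) := by
  unfold lassoObjective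
  fun_prop

theorem continuous_lassoObjective_uncurry :
    Continuous (Function.uncurry fun (θ : Matrix n n ℝ × (n → ℝ) × ℝ) (u : n → ℝ) =>
      lassoObjective θ.1 θ.2.1 θ.2.2 u) := by
  unfold lassoObjective Function.uncurry
  fun_prop

theorem sum_abs_le_card_mul_norm (u : n → ℝ) : ∑ j, |u j| ≤ Fintype.card n * ‖u‖ := by
  simpa using Pi.sum_norm_apply_le_norm u

theorem abs_dotProduct_le_card_mul_norm_mul_norm (u b : n → ℝ) :
    |u ⬝ᵥ b| ≤ Fintype.card n * ‖u‖ * ‖b‖ :=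
  calc |u ⬝ᵥ b| ≤ ∑ j, |u j| * ‖b‖ :=
        (Finset.abs_sum_le_sum_abs _ _).trans <| Finset.sum_le_sum fun j _ => by
          rw [abs_mul]; gcongr; exact norm_le_pi_norm b j
    _ = (∑ j, |u j|) * ‖b‖ := (Finset.sum_mul ..).symm
    _ ≤ Fintype.card n * ‖u‖ * ‖b‖ := by gcongr; exact sum_abs_le_card_mul_norm u

theorem sub_le_lassoObjective {A : Matrix n n ℝ} {m : ℝ}
    (hA : ∀ u : n → ℝ, m * ‖u‖ ^ 2 ≤ u ⬝ᵥ A *ᵥ u) (b : n → ℝ) (lam : ℝ) (u : n → ℝ) :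
    m * ‖u‖ ^ 2 - Fintype.card n * (2 * ‖b‖ + |lam|) * ‖u‖ ≤ lassoObjective A b lam u := by
  have hdot := (abs_le.1 (abs_dotProduct_le_card_mul_norm_mul_norm u b)).2
  have hsum := sum_abs_le_card_mul_norm u
  have hlam : -|lam| * ∑ j, |u j| ≤ lam * ∑ j, |u j| :=
    mul_le_mul_of_nonneg_right (neg_abs_le lam) (Finset.sum_nonneg fun j _ => abs_nonneg _)
  have hlam' : |lam| * ∑ j, |u j| ≤ |lam| * (Fintype.card n * ‖u‖) :=
    mul_le_mul_of_nonneg_left hsum (abs_nonneg lam)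
  unfold lassoObjective
  linarith [hA u]

theorem tendsto_lassoObjective_cocompact {A : Matrix n n ℝ} {m : ℝ} (hm : 0 < m)
    (hA : ∀ u : n → ℝ, m * ‖u‖ ^ 2 ≤ u ⬝ᵥ A *ᵥ u) (b : n → ℝ) (lam : ℝ) :
    Tendsto (lassoObjective A b lam) (cocompact _) atTop := by
  set c := Fintype.card n * (2 * ‖b‖ + |lam|)
  have hquad : Tendsto (fun t : ℝ => t * (m * t - c)) atTop atTop :=
    tendsto_id.atTop_mul_atTop₀ (tendsto_atTop_add_const_right _ _ (tendsto_id.const_mul_atTop hm))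
  refine tendsto_atTop_mono (fun u => ?_) (hquad.comp tendsto_norm_cocompact_atTop)
  have := sub_le_lassoObjective hA b lam u
  simp only [Function.comp_apply]
  linarith

theorem norm_le_of_lassoObjective_nonpos {A : Matrix n n ℝ} {m : ℝ} (hm : 0 < m)
    (hA : ∀ u : n → ℝ, m * ‖u‖ ^ 2 ≤ u ⬝ᵥ A *ᵥ u) {b : n → ℝ} {lam : ℝ} {u : n → ℝ}
    (hu : lassoObjective A b lam u ≤ 0) :
    ‖u‖ ≤ Fintype.card n * (2 * ‖b‖ + |lam|) / m := by
  have := sub_le_lassoObjective hA b lam u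
  have hc : 0 ≤ (Fintype.card n : ℝ) * (2 * ‖b‖ + |lam|) := by positivity
  rw [le_div_iff₀ hm]
  by_contra! h
  have hu0 : 0 < ‖u‖ := pos_of_mul_pos_left (hc.trans_lt h) hm.le
  nlinarith [mul_lt_mul_of_pos_left h hu0]

theorem convexOn_sum_abs : ConvexOn ℝ univ fun u : n → ℝ => ∑ j, |u j| := by
  refine ⟨convex_univ, fun x _ y _ a b ha hb _ => ?_⟩
  simp only [Pi.add_apply, Pi.smul_apply, smul_eq_mul, Finset.mul_sum, ← Finset.sum_add_distrib]
  refine Finset.sum_le_sum fun j _ => ?_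
  calc |a * x j + b * y j| ≤ |a * x j| + |b * y j| := abs_add_le _ _
    _ = a * |x j| + b * |y j| := by rw [abs_mul, abs_mul, abs_of_nonneg ha, abs_of_nonneg hb]

theorem concaveOn_two_mul_dotProduct (b : n → ℝ) :
    ConcaveOn ℝ univ fun u : n → ℝ => 2 * (u ⬝ᵥ b) := by
  refine ⟨convex_univ, fun x _ y _ a c _ _ _ => le_of_eq ?_⟩
  simp only [add_dotProduct, smul_dotProduct, smul_eq_mul]
  ring

theorem strictConvexOn_lassoObjective {A : Matrix n n ℝ} (hA : A.PosDef) (b : n → ℝ) {lam : ℝ}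
    (hlam : 0 ≤ lam) : StrictConvexOn ℝ univ (lassoObjective A b lam) :=
  ((hA.strictConvexOn_dotProduct_mulVec.sub_concaveOn
    (concaveOn_two_mul_dotProduct b)).add_convexOn (convexOn_sum_abs.smul hlam) :)

theorem tendstoUniformlyOn_lassoObjective {ι : Type*} {l : Filter ι} {A : ι → Matrix n n ℝ}
    {b : ι → n → ℝ} {lam : ι → ℝ} {C : Matrix n n ℝ} {w : n → ℝ} {lam₀ : ℝ}
    (hA : Tendsto A l (𝓝 C)) (hb : Tendsto b l (𝓝 w)) (hlam : Tendsto lam l (𝓝 lam₀))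
    {K : Set (n → ℝ)} (hK : IsCompact K) :
    TendstoUniformlyOn (fun i => lassoObjective (A i) (b i) (lam i))
      (lassoObjective C w lam₀) l K :=
  (hK.tendstoUniformlyOn_of_continuous_uncurry continuous_lassoObjective_uncurry
    (hA.prodMk_nhds (hb.prodMk_nhds hlam)) :)

theorem Matrix.PosDef.exists_forall_lassoObjective_le {A : Matrix n n ℝ} (hA : A.PosDef)
    (b : n → ℝ) (lam : ℝ) : ∃ u, ∀ v, lassoObjective A b lam u ≤ lassoObjective A b lam v :=
  let ⟨_, hm, hmA⟩ := hA.exists_pos_mul_sq_norm_le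
  (continuous_lassoObjective A b lam).exists_forall_le
    (tendsto_lassoObjective_cocompact hm hmA b lam)

theorem Matrix.PosDef.exists_eventually_norm_le_of_lassoObjective_nonpos {ι : Type*}
    {l : Filter ι} {A : ι → Matrix n n ℝ} {b : ι → n → ℝ} {lam : ι → ℝ} {C : Matrix n n ℝ}
    {w : n → ℝ} {lam₀ : ℝ} (hC : C.PosDef) (hA : Tendsto A l (𝓝 C)) (hb : Tendsto b l (𝓝 w))
    (hlam : Tendsto lam l (𝓝 lam₀)) {u : ι → n → ℝ}
    (hu : ∀ i, lassoObjective (A i) (b i) (lam i) (u i) ≤ 0) :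
    ∃ R, ∀ᶠ i in l, ‖u i‖ ≤ R := by
  obtain ⟨m, hm, hmA⟩ := hC.eventually_mul_sq_norm_le hA
  refine ⟨Fintype.card n * (2 * (‖w‖ + 1) + (|lam₀| + 1)) / m, ?_⟩
  filter_upwards [hmA, hb.norm.eventually_lt_const (lt_add_one ‖w‖),
    hlam.abs.eventually_lt_const (lt_add_one |lam₀|)] with i hi hbi hlami
  refine (norm_le_of_lassoObjective_nonpos hm hi (hu i)).trans ?_
  gcongr

end Lasso

theorem stmt_17_general (p : ℕ) (Cseq : ℕ → Matrix (Fin p) (Fin p) ℝ) (C : Matrix (Fin p) (Fin p) ℝ)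
    (hCpd : C.PosDef)
    (hCconv : ∀ i j, Filter.Tendsto (fun n => Cseq n i j) Filter.atTop (nhds (C i j)))
    (wseq : ℕ → Fin p → ℝ) (w : Fin p → ℝ)
    (hwconv : Filter.Tendsto wseq Filter.atTop (nhds w))
    (lamseq : ℕ → ℝ) (lam0 : ℝ) (hlam0 : 0 ≤ lam0)
    (hlamconv : Filter.Tendsto lamseq Filter.atTop (nhds lam0))
    (Vn : ℕ → (Fin p → ℝ) → ℝ) (V : (Fin p → ℝ) → ℝ)
    (hVn : ∀ n u, Vn n u = u ⬝ᵥ (Cseq n).mulVec u - 2 * (u ⬝ᵥ wseq n)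
        + lamseq n * ∑ j, |u j|)
    (hV : ∀ u, V u = u ⬝ᵥ C.mulVec u - 2 * (u ⬝ᵥ w) + lam0 * ∑ j, |u j|) :
    (∀ K : Set (Fin p → ℝ), IsCompact K → TendstoUniformlyOn Vn V Filter.atTop K) ∧
    ∃ ustar : Fin p → ℝ, (∀ v, V ustar ≤ V v) ∧ (∀ u, (∀ v, V u ≤ V v) → u = ustar) ∧
      ∀ useq : ℕ → (Fin p → ℝ), (∀ n v, Vn n (useq n) ≤ Vn n v) →
        Filter.Tendsto useq Filter.atTop (nhds ustar) := by
  obtain rfl : Vn = fun n => lassoObjective (Cseq n) (wseq n) (lamseq n) := by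
    ext n u; exact hVn n u
  obtain rfl : V = lassoObjective C w lam0 := by ext u; exact hV u
  have hC : Tendsto Cseq atTop (𝓝 C) := tendsto_pi_nhds.2 fun i => tendsto_pi_nhds.2 (hCconv i)
  have hunif := fun K (hK : IsCompact K) =>
    tendstoUniformlyOn_lassoObjective hC hwconv hlamconv hK
  obtain ⟨ustar, hustar⟩ := hCpd.exists_forall_lassoObjective_le w lam0
  have huniq : ∀ u, (∀ v, lassoObjective C w lam0 u ≤ lassoObjective C w lam0 v) → u = ustar :=
    fun u hu => (strictConvexOn_lassoObjective hCpd w hlam0).eq_of_isMinOn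
      (fun v _ => hu v) (fun v _ => hustar v) trivial trivial
  refine ⟨hunif, ustar, hustar, huniq, fun useq husq => ?_⟩
  obtain ⟨R, hR⟩ := hCpd.exists_eventually_norm_le_of_lassoObjective_nonpos hC hwconv hlamconv
    fun n => (husq n 0).trans_eq (lassoObjective_zero ..)
  have hK := isCompact_closedBall (0 : Fin p → ℝ) (max R ‖ustar‖)
  exact tendsto_argmin_of_tendstoUniformlyOn (continuous_lassoObjective C w lam0) hK (hunif _ hK)
    (mem_closedBall_zero_iff.2 (le_max_right _ _))
    (hR.mono fun n hn => mem_closedBall_zero_iff.2 (hn.trans (le_max_left _ _)))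
    (fun n => husq n ustar)
    fun y _ hy => (hustar y).lt_of_ne fun h => hy (huniq y fun v => h ▸ hustar v)

/-- Deterministic core of the argmin-convergence arguments: if `Cₙ → C` entrywise
(`Cₙ` symmetric PSD, `C` PD), `wₙ → w`, `λₙ → λ₀ ≥ 0`, then the convex objectives
`Vₙ` converge to `V` uniformly on compacts, `V` has a unique minimizer `u*`, and
any sequence of minimizers of `Vₙ` converges to `u*`. -/
theorem stmt_17 (p : ℕ) (Cseq : ℕ → Matrix (Fin p) (Fin p) ℝ) (C : Matrix (Fin p) (Fin p) ℝ)
    (hCseq : ∀ n, (Cseq n).IsSymm ∧ (Cseq n).PosSemidef)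
    (hCsymm : C.IsSymm) (hCpd : C.PosDef)
    (hCconv : ∀ i j, Filter.Tendsto (fun n => Cseq n i j) Filter.atTop (nhds (C i j)))
    (wseq : ℕ → Fin p → ℝ) (w : Fin p → ℝ)
    (hwconv : Filter.Tendsto wseq Filter.atTop (nhds w))
    (lamseq : ℕ → ℝ) (lam0 : ℝ) (hlam0 : 0 ≤ lam0)
    (hlamconv : Filter.Tendsto lamseq Filter.atTop (nhds lam0))
    (Vn : ℕ → (Fin p → ℝ) → ℝ) (V : (Fin p → ℝ) → ℝ)
    (hVn : ∀ n u, Vn n u = u ⬝ᵥ (Cseq n).mulVec u - 2 * (u ⬝ᵥ wseq n)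
        + lamseq n * ∑ j, |u j|)
    (hV : ∀ u, V u = u ⬝ᵥ C.mulVec u - 2 * (u ⬝ᵥ w) + lam0 * ∑ j, |u j|) :
    (∀ K : Set (Fin p → ℝ), IsCompact K → TendstoUniformlyOn Vn V Filter.atTop K) ∧
    ∃ ustar : Fin p → ℝ, (∀ v, V ustar ≤ V v) ∧ (∀ u, (∀ v, V u ≤ V v) → u = ustar) ∧
      ∀ useq : ℕ → (Fin p → ℝ), (∀ n v, Vn n (useq n) ≤ Vn n v) →
        Filter.Tendsto useq Filter.atTop (nhds ustar) :=
  stmt_17_general p Cseq C hCpd hCconv wseq w hwconv lamseq lam0 hlam0 hlamconv Vn V hVn hV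
end
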